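/- arXiv:hep-th/9607234 — 3 statements merged into one kernel-verified Lean document; each statement's English description precedes it below -/
import Mathlib

section
/- Let N ≥ 1 and let w : ℝ → ℝ be measurable with ∫ |λ|^j |w(λ)| dλ < ∞ for 0 ≤ j ≤ 2N−2, and set m_j := ∫ λ^j w(λ) dλ. Then (1/N!) ∫_{ℝ^N} Δ(λ_1,…,λ_N)^2 ∏_{k=1}^N w(λ_k) dλ = det( m_{i+j−2} )_{i,j=1,…,N}. (This evaluates the one-matrix model eigenvalue integral as a Hankel determinant of moments.) -/
open MeasureTheory

/-- The Vandermonde product `Δ(l₁,…,l_N) = ∏_{j<i} (l_i − l_j)`. -/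
noncomputable def vdm {N : ℕ} (l : Fin N → ℝ) : ℝ :=
  ∏ i : Fin N, ∏ j ∈ Finset.Ioi i, (l j - l i)

/-
Heine's formula. Writing `Δ(λ)² ∏ w(λₖ) = det (λₖ^i) · det (λₖ^j w(λₖ))` and expanding both
determinants over permutations `σ, τ`, every term is a product of one-variable functions, so Fubini
turns it into `sign σ · sign τ · ∏ₖ m_{σ k + τ k}`. For fixed `σ` the sum over `τ` is the
determinant of the Hankel matrix with rows permuted by `σ`, i.e. `sign σ · det (m_{i+j})`, and the
`N!` choices of `σ` give the factor `N!` (Andréief's identity).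
-/

open Equiv Matrix

section Andreief

variable {ι : Type*} [Fintype ι] [DecidableEq ι]

theorem Matrix.sum_sum_sign_mul_sign_mul_prod {R : Type*} [CommRing R] (M : Matrix ι ι R) :
    ∑ σ : Perm ι, ∑ τ : Perm ι,
        (Perm.sign σ : R) * Perm.sign τ * ∏ k, M (σ k) (τ k) =
      (Fintype.card ι).factorial * M.det := by
  have row_sum (σ : Perm ι) :
      ∑ τ : Perm ι, (Perm.sign σ : R) * Perm.sign τ * ∏ k, M (σ k) (τ k) = M.det := by
    have h := det_permute σ M
    rw [← det_transpose, det_apply'] at h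
    simp_rw [mul_assoc, ← Finset.mul_sum]
    simp only [transpose_apply, submatrix_apply, id] at h
    rw [h, ← mul_assoc, ← Int.cast_mul, ← Units.val_mul, Int.units_mul_self, Units.val_one,
      Int.cast_one, one_mul]
  simp only [row_sum, Finset.sum_const, Finset.card_univ, Fintype.card_perm, nsmul_eq_mul]

theorem Matrix.det_of_apply_eq_sum_sign_mul_prod {R : Type*} [CommRing R] (A : ι → ι → R) :
    (of fun k i => A i k).det = ∑ σ : Perm ι, (Perm.sign σ : R) * ∏ k, A (σ k) k := by
  rw [← det_transpose, det_apply']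
  rfl

variable {𝕜 α : Type*} [RCLike 𝕜] [MeasurableSpace α] (μ : Measure α) [SigmaFinite μ]

theorem integral_det_mul_det_eq_factorial_mul_det (f g : ι → α → 𝕜)
    (hfg : ∀ i j, Integrable (fun t => f i t * g j t) μ) :
    ∫ x : ι → α, (of fun k i => f i (x k)).det * (of fun k j => g j (x k)).det
        ∂Measure.pi (fun _ => μ) =
      (Fintype.card ι).factorial * (of fun i j => ∫ t, f i t * g j t ∂μ).det := by
  have hprod (σ τ : Perm ι) : Integrable (fun x : ι → α => ∏ k, (f (σ k) (x k) * g (τ k) (x k)))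
      (Measure.pi fun _ => μ) :=
    Integrable.fintype_prod fun k => hfg (σ k) (τ k)
  have expand (x : ι → α) :
      (of fun k i => f i (x k)).det * (of fun k j => g j (x k)).det =
        ∑ σ : Perm ι, ∑ τ : Perm ι,
          (Perm.sign σ : 𝕜) * Perm.sign τ * ∏ k, (f (σ k) (x k) * g (τ k) (x k)) := by
    rw [det_of_apply_eq_sum_sign_mul_prod, det_of_apply_eq_sum_sign_mul_prod,
      Finset.sum_mul_sum]
    refine Finset.sum_congr rfl fun σ _ => Finset.sum_congr rfl fun τ _ => ?_
    rw [Finset.prod_mul_distrib]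
    ring
  calc _ = ∑ σ : Perm ι, ∑ τ : Perm ι,
          (Perm.sign σ : 𝕜) * Perm.sign τ * ∏ k, ∫ t, f (σ k) t * g (τ k) t ∂μ := by
        simp_rw [expand]
        rw [integral_finsetSum _ fun σ _ =>
          integrable_finsetSum _ fun τ _ => (hprod σ τ).const_mul _]
        refine Finset.sum_congr rfl fun σ _ => ?_
        rw [integral_finsetSum _ fun τ _ => (hprod σ τ).const_mul _]
        refine Finset.sum_congr rfl fun τ _ => ?_
        rw [integral_const_mul, integral_fintype_prod_eq_prod (fun k t => f (σ k) t * g (τ k) t)]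
    _ = _ := sum_sum_sign_mul_sign_mul_prod (of fun i j => ∫ t, f i t * g j t ∂μ)

end Andreief

theorem vdm_sq_mul_prod_eq_det_mul_det {N : ℕ} (w : ℝ → ℝ) (l : Fin N → ℝ) :
    vdm l ^ 2 * ∏ k, w (l k) =
      (of fun k i : Fin N => l k ^ (i : ℕ)).det *
        (of fun k j : Fin N => l k ^ (j : ℕ) * w (l k)).det := by
  have weighted : (of fun k j : Fin N => l k ^ (j : ℕ) * w (l k)).det =
      (∏ k, w (l k)) * (vandermonde l).det := by
    rw [← det_mul_column]
    simp_rw [mul_comm]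
    rfl
  rw [weighted, vdm, ← det_vandermonde]
  simp only [vandermonde]
  ring

theorem stmt2_general (N : ℕ) (w : ℝ → ℝ) (hw : Measurable w)
    (hint : ∀ j : ℕ, j ≤ 2 * N - 2 →
      Integrable (fun x : ℝ => |x| ^ j * |w x|))
    (m : ℕ → ℝ) (hm : ∀ j, m j = ∫ x : ℝ, x ^ j * w x) :
    (1 / (N.factorial : ℝ)) *
        ∫ lam : Fin N → ℝ, (vdm lam) ^ 2 * ∏ k : Fin N, w (lam k) =
      Matrix.det (Matrix.of fun i j : Fin N => m ((i : ℕ) + (j : ℕ))) := by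
  have hmoment (i j : Fin N) : Integrable (fun x : ℝ => x ^ (i : ℕ) * (x ^ (j : ℕ) * w x)) := by
    have hmeas : AEStronglyMeasurable (fun x : ℝ => x ^ ((i : ℕ) + j) * w x) :=
      ((measurable_id.pow_const _).mul hw).aestronglyMeasurable
    simp_rw [← mul_assoc, ← pow_add]
    refine (integrable_norm_iff hmeas).mp ?_
    simpa only [Real.norm_eq_abs, abs_mul, abs_pow] using hint _ (by omega)
  simp_rw [vdm_sq_mul_prod_eq_det_mul_det, volume_pi]
  rw [integral_det_mul_det_eq_factorial_mul_det _ _ _ hmoment, Fintype.card_fin]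
  simp_rw [← mul_assoc, ← pow_add, ← hm]
  field_simp

theorem stmt2 (N : ℕ) (hN : 1 ≤ N) (w : ℝ → ℝ) (hw : Measurable w)
    (hint : ∀ j : ℕ, j ≤ 2 * N - 2 →
      Integrable (fun x : ℝ => |x| ^ j * |w x|))
    (m : ℕ → ℝ) (hm : ∀ j, m j = ∫ x : ℝ, x ^ j * w x) :
    (1 / (N.factorial : ℝ)) *
        ∫ lam : Fin N → ℝ, (vdm lam) ^ 2 * ∏ k : Fin N, w (lam k) =
      Matrix.det (Matrix.of fun i j : Fin N => m ((i : ℕ) + (j : ℕ))) :=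
  stmt2_general N w hw hint m hm
end

section
/- Let N ≥ 1 and let K : ℝ×ℝ → ℝ be measurable such that for every (x,y) ∈ ℝ², ∫∫ (1+|λ|)^{N−1} (1+|μ|)^{N−1} |K(λ,μ)| e^{xλ+yμ} dλ dμ < ∞. Then h(x,y) := ∫∫ K(λ,μ) e^{xλ+yμ} dλ dμ has partial derivatives ∂_x^{i−1}∂_y^{j−1} h(x,y) = ∫∫ λ^{i−1} μ^{j−1} K(λ,μ) e^{xλ+yμ} dλ dμ for 1 ≤ i, j ≤ N, and for every (x,y): (1/N!) ∫_{ℝ^N}∫_{ℝ^N} Δ(λ_1,…,λ_N) Δ(μ_1,…,μ_N) ∏_{k=1}^N K(λ_k,μ_k) e^{xλ_k+yμ_k} dλ dμ = det( ∂_x^{i−1}∂_y^{j−1} h(x,y) )_{i,j=1,…,N}. (This is the closed-form solution Z_N = det‖∂_{t̃_1}^{i−1}∂_{t_1}^{j−1} h_0‖ of the two-matrix and multi-matrix model partition functions.) -/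
open MeasureTheory

/-!
Differentiation under the integral sign rests on the bound `e^{sb} ≤ e^{(t-1)b} + e^{(t+1)b}`
for `|s - t| < 1`: with the weight `(1 + |λ|)^(N-1)` it gives one integrable majorant, uniform in
the parameter near `t`, for every derivative of order at most `N - 1`, so `∂ₓⁱ ∂ᵧʲ h` is the
`(i, j)` moment of `K(λ, μ) e^{xλ + yμ}`.

The determinant formula is Andreief's identity. Each Vandermonde product is `det (λₖ^i)`;
expanding both determinants over permutations `σ, τ`, Fubini splits every term into a product of
integrals over single pairs `(λₖ, μₖ)`, i.e. of moments `A (σ k) (τ k)`, and summing over `τ` for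
fixed `σ` gives `sign σ * det A`, so the total is `N! * det A`.
-/

open Real Matrix Equiv

section IteratedDeriv

variable {𝕜 F : Type*} [NontriviallyNormedField 𝕜] [NormedAddCommGroup F] [NormedSpace 𝕜 F]
  {G : ℕ → 𝕜 → F} {n : ℕ}

theorem iteratedDeriv_eq_of_hasDerivAt_succ
    (hG : ∀ k < n, ∀ t, HasDerivAt (G k) (G (k + 1) t) t) {k : ℕ} (hk : k ≤ n) :
    iteratedDeriv k (G 0) = G k := by
  induction k with
  | zero => exact iteratedDeriv_zero
  | succ k ih =>
    rw [iteratedDeriv_succ, ih (by omega)]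
    exact funext fun t => (hG k (by omega) t).deriv

theorem contDiff_of_hasDerivAt_succ
    (hG : ∀ k < n, ∀ t, HasDerivAt (G k) (G (k + 1) t) t) (hcont : Continuous (G n)) :
    ContDiff 𝕜 n (G 0) := by
  have hdiff : ∀ k < n, Differentiable 𝕜 (G k) := fun k hk t => (hG k hk t).differentiableAt
  refine contDiff_nat_iff_iteratedDeriv.2 ⟨fun k hk => ?_, fun k hk => ?_⟩
  · rw [iteratedDeriv_eq_of_hasDerivAt_succ hG hk]
    rcases hk.lt_or_eq with hk | rfl
    · exact (hdiff k hk).continuous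
    · exact hcont
  · rw [iteratedDeriv_eq_of_hasDerivAt_succ hG hk.le]
    exact hdiff k hk

end IteratedDeriv

theorem exp_mul_le_exp_add_exp {s t b : ℝ} (hs : |s - t| < 1) :
    exp (s * b) ≤ exp ((t - 1) * b) + exp ((t + 1) * b) := by
  rw [abs_lt] at hs
  rcases le_total 0 b with hb | hb
  · have : s * b ≤ (t + 1) * b := mul_le_mul_of_nonneg_right (by linarith) hb
    linarith [exp_le_exp.2 this, exp_pos ((t - 1) * b)]
  · have : s * b ≤ (t - 1) * b := mul_le_mul_of_nonpos_right (by linarith) hb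
    linarith [exp_le_exp.2 this, exp_pos ((t + 1) * b)]

theorem abs_pow_le_one_add_abs_pow {k n : ℕ} (hk : k ≤ n) (b : ℝ) : |b| ^ k ≤ (1 + |b|) ^ n :=
  (pow_le_pow_left₀ (abs_nonneg b) (by linarith) k).trans
    (pow_le_pow_right₀ (by linarith [abs_nonneg b]) hk)

theorem norm_pow_mul_mul_exp_le {k n : ℕ} (hk : k ≤ n) {s t : ℝ} (hs : |s - t| < 1) (b c : ℝ) :
    ‖b ^ k * c * exp (s * b)‖ ≤
      (1 + |b|) ^ n * |c| * (exp ((t - 1) * b) + exp ((t + 1) * b)) := by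
  rw [Real.norm_eq_abs, abs_mul, abs_mul, abs_pow, abs_exp]
  gcongr
  · exact abs_pow_le_one_add_abs_pow hk b
  · exact exp_mul_le_exp_add_exp hs

noncomputable def laplaceMoment {α : Type*} [MeasurableSpace α] (μ : Measure α) (a g : α → ℝ)
    (k : ℕ) (t : ℝ) : ℝ :=
  ∫ ω, a ω ^ k * g ω * exp (t * a ω) ∂μ

section LaplaceMoment

variable {α : Type*} [MeasurableSpace α] {μ : Measure α} {a g : α → ℝ} {n : ℕ}
  (ha : Measurable a) (hg : AEStronglyMeasurable g μ)
  (hint : ∀ t, Integrable (fun ω => (1 + |a ω|) ^ n * |g ω| * exp (t * a ω)) μ)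

include hint in
theorem integrable_laplaceMoment_bound (t : ℝ) :
    Integrable (fun ω => (1 + |a ω|) ^ n * |g ω| * (exp ((t - 1) * a ω) + exp ((t + 1) * a ω)))
      μ := by
  simp_rw [mul_add]
  exact (hint _).add (hint _)

include ha hg hint

theorem integrable_pow_mul_mul_exp {k : ℕ} (hk : k ≤ n) (t : ℝ) :
    Integrable (fun ω => a ω ^ k * g ω * exp (t * a ω)) μ :=
  (integrable_laplaceMoment_bound hint t).mono' (by fun_prop)
    (ae_of_all _ fun ω => norm_pow_mul_mul_exp_le hk (by simp) _ _)

theorem hasDerivAt_laplaceMoment {k : ℕ} (hk : k < n) (t : ℝ) :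
    HasDerivAt (laplaceMoment μ a g k) (laplaceMoment μ a g (k + 1) t) t := by
  refine (hasDerivAt_integral_of_dominated_loc_of_deriv_le
    (F := fun s ω => a ω ^ k * g ω * exp (s * a ω))
    (F' := fun s ω => a ω ^ (k + 1) * g ω * exp (s * a ω))
    (Metric.ball_mem_nhds t one_pos) (Filter.Eventually.of_forall fun s => by fun_prop)
    (integrable_pow_mul_mul_exp ha hg hint hk.le t) (by fun_prop)
    (ae_of_all _ fun ω s hs => norm_pow_mul_mul_exp_le hk (Real.dist_eq s t ▸ hs) _ _)
    (integrable_laplaceMoment_bound hint t) (ae_of_all _ fun ω s _ => ?_)).2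
  have := ((hasDerivAt_id s).mul_const (a ω)).exp.const_mul (a ω ^ k * g ω)
  refine this.congr_deriv ?_
  simp only [id, one_mul]
  ring

theorem continuous_laplaceMoment {k : ℕ} (hk : k ≤ n) : Continuous (laplaceMoment μ a g k) :=
  continuous_iff_continuousAt.2 fun t => continuousAt_of_dominated
    (F := fun s ω => a ω ^ k * g ω * exp (s * a ω))
    (Filter.Eventually.of_forall fun s => by fun_prop)
    (Filter.eventually_of_mem (Metric.ball_mem_nhds t one_pos) fun s hs =>
      ae_of_all _ fun ω => norm_pow_mul_mul_exp_le hk (Real.dist_eq s t ▸ hs) _ _)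
    (integrable_laplaceMoment_bound hint t) (ae_of_all _ fun ω => by fun_prop)

theorem iteratedDeriv_laplaceMoment {k : ℕ} (hk : k ≤ n) :
    iteratedDeriv k (laplaceMoment μ a g 0) = laplaceMoment μ a g k :=
  iteratedDeriv_eq_of_hasDerivAt_succ (G := laplaceMoment μ a g)
    (fun _ hk' => hasDerivAt_laplaceMoment ha hg hint hk') hk

theorem contDiff_laplaceMoment : ContDiff ℝ n (laplaceMoment μ a g 0) :=
  contDiff_of_hasDerivAt_succ (G := laplaceMoment μ a g)
    (fun _ hk => hasDerivAt_laplaceMoment ha hg hint hk)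
    (continuous_laplaceMoment ha hg hint le_rfl)

end LaplaceMoment

theorem sum_sign_mul_sign_mul_prod {ι R : Type*} [Fintype ι] [DecidableEq ι] [CommRing R]
    (A : Matrix ι ι R) :
    ∑ σ : Perm ι, ∑ τ : Perm ι, (Perm.sign σ : R) * Perm.sign τ * ∏ k, A (σ k) (τ k) =
      (Fintype.card ι).factorial * A.det := by
  have hrow : ∀ σ : Perm ι, ∑ τ : Perm ι, (Perm.sign τ : R) * ∏ k, A (σ k) (τ k) =
      Perm.sign σ * A.det := fun σ => by
    rw [← det_permute, ← det_transpose, det_apply']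
    rfl
  have hsign : ∀ σ : Perm ι, (Perm.sign σ : R) * Perm.sign σ = 1 := fun σ => by
    rw [← Int.cast_mul, ← Units.val_mul, Int.units_mul_self, Units.val_one, Int.cast_one]
  simp_rw [mul_assoc, ← Finset.mul_sum, hrow, ← mul_assoc, hsign, one_mul, Finset.sum_const,
    Finset.card_univ, Fintype.card_perm, nsmul_eq_mul]

section Andreief

variable {α β ι : Type*} [MeasurableSpace α] [MeasurableSpace β] {μ : Measure α} {ν : Measure β}
  [SigmaFinite μ] [SigmaFinite ν] [Fintype ι]

theorem integral_pi_integral_pi_sum_prod {S : Type*} [Fintype S] (c : S → ℝ)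
    (φ : S → ι → α × β → ℝ) (hφ : ∀ s k, Integrable (φ s k) (μ.prod ν)) :
    ∫ l, ∫ m, ∑ s, c s * ∏ k, φ s k (l k, m k) ∂Measure.pi (fun _ => ν) ∂Measure.pi (fun _ => μ)
      = ∑ s, c s * ∏ k, ∫ p, φ s k p ∂(μ.prod ν) := by
  have hsection : ∀ᵐ l ∂Measure.pi (fun _ => μ), ∀ s k, Integrable (fun b => φ s k (l k, b)) ν :=
    ae_all_iff.2 fun s => ae_all_iff.2 fun k =>
      (Measure.tendsto_eval_ae_ae (μ := fun _ => μ) (i := k)).eventually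
        (p := fun a => Integrable (fun b => φ s k (a, b)) ν) (hφ s k).prod_right_ae
  have hinner : (fun l => ∫ m, ∑ s, c s * ∏ k, φ s k (l k, m k) ∂Measure.pi (fun _ => ν))
      =ᵐ[Measure.pi (fun _ => μ)] fun l => ∑ s, c s * ∏ k, ∫ b, φ s k (l k, b) ∂ν := by
    filter_upwards [hsection] with l hl
    rw [integral_finsetSum _ fun s _ => (Integrable.fintype_prod (hl s)).const_mul _]
    refine Finset.sum_congr rfl fun s _ => ?_
    rw [integral_const_mul, integral_fintype_prod_eq_prod (fun k b => φ s k (l k, b))]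
  rw [integral_congr_ae hinner, integral_finsetSum _ fun s _ =>
    (Integrable.fintype_prod fun k => (hφ s k).integral_prod_left).const_mul _]
  refine Finset.sum_congr rfl fun s _ => ?_
  rw [integral_const_mul, integral_fintype_prod_eq_prod (fun k a => ∫ b, φ s k (a, b) ∂ν)]
  simp_rw [integral_prod _ (hφ s _)]

theorem integral_det_mul_det_mul_prod [DecidableEq ι] (f : ι → α → ℝ) (g : ι → β → ℝ)
    (w : α × β → ℝ) (hfgw : ∀ i j, Integrable (fun p => f i p.1 * g j p.2 * w p) (μ.prod ν)) :
    ∫ l, ∫ m, (of fun i k => f i (l k)).det * (of fun j k => g j (m k)).det *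
        ∏ k, w (l k, m k) ∂Measure.pi (fun _ => ν) ∂Measure.pi (fun _ => μ) =
      (Fintype.card ι).factorial *
        (of fun i j => ∫ p, f i p.1 * g j p.2 * w p ∂(μ.prod ν)).det := by
  have hexpand : ∀ (l : ι → α) (m : ι → β),
      (of fun i k => f i (l k)).det * (of fun j k => g j (m k)).det * ∏ k, w (l k, m k) =
        ∑ st : Perm ι × Perm ι, (Perm.sign st.1 : ℝ) * Perm.sign st.2 *
          ∏ k, f (st.1 k) (l k) * g (st.2 k) (m k) * w (l k, m k) := fun l m => by
    simp_rw [det_apply', of_apply, Finset.sum_mul_sum, Finset.sum_mul, Fintype.sum_prod_type,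
      Finset.prod_mul_distrib]
    refine Finset.sum_congr rfl fun σ _ => Finset.sum_congr rfl fun τ _ => ?_
    ring
  simp_rw [hexpand]
  refine (integral_pi_integral_pi_sum_prod _
    (fun (st : Perm ι × Perm ι) k p => f (st.1 k) p.1 * g (st.2 k) p.2 * w p)
    fun _ _ => hfgw _ _).trans ?_
  rw [Fintype.sum_prod_type, ← sum_sign_mul_sign_mul_prod]
  rfl

end Andreief

theorem vdm_eq_det {N : ℕ} (l : Fin N → ℝ) : vdm l = (of fun i k : Fin N => l k ^ (i : ℕ)).det := by
  rw [vdm, ← det_vandermonde, ← det_transpose]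
  rfl

theorem pow_mul_mul_exp_eq_mul_exp_add (K : ℝ × ℝ → ℝ) (i j : ℕ) (x y : ℝ) (p : ℝ × ℝ) :
    p.1 ^ i * (p.2 ^ j * K p * exp (y * p.2)) * exp (x * p.1) =
      p.1 ^ i * p.2 ^ j * K p * exp (x * p.1 + y * p.2) := by
  rw [exp_add]
  ring

theorem laplace_eq_laplaceMoment_snd (K : ℝ × ℝ → ℝ) (x : ℝ) :
    (fun y => ∫ p : ℝ × ℝ, K p * exp (x * p.1 + y * p.2)) =
      laplaceMoment volume Prod.snd (fun p => K p * exp (x * p.1)) 0 :=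
  funext fun y => integral_congr_ae (ae_of_all _ fun p => by
    simp only [pow_zero, one_mul, exp_add]
    ring)

section TwoSidedLaplace

variable {N : ℕ} {K : ℝ × ℝ → ℝ} (hK : Measurable K)
  (hint : ∀ x y : ℝ, Integrable (fun p : ℝ × ℝ =>
    (1 + |p.1|) ^ (N - 1) * (1 + |p.2|) ^ (N - 1) * |K p| * exp (x * p.1 + y * p.2)))
include hK hint

theorem integrable_laplace_bound_snd (x t : ℝ) :
    Integrable (fun p : ℝ × ℝ =>
      (1 + |p.2|) ^ (N - 1) * |K p * exp (x * p.1)| * exp (t * p.2)) := by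
  refine (hint x t).mono' (by fun_prop) (ae_of_all _ fun p => ?_)
  have hweight : 1 ≤ (1 + |p.1|) ^ (N - 1) := one_le_pow₀ (by linarith [abs_nonneg p.1])
  rw [Real.norm_eq_abs, abs_of_nonneg (by positivity), abs_mul, abs_exp, exp_add]
  calc (1 + |p.2|) ^ (N - 1) * (|K p| * exp (x * p.1)) * exp (t * p.2)
      ≤ (1 + |p.1|) ^ (N - 1) * ((1 + |p.2|) ^ (N - 1) * (|K p| * exp (x * p.1)) * exp (t * p.2)) :=
        le_mul_of_one_le_left (by positivity) hweight
    _ = _ := by ring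

theorem integrable_laplace_bound_fst {j : ℕ} (hj : j ≤ N - 1) (y t : ℝ) :
    Integrable (fun p : ℝ × ℝ =>
      (1 + |p.1|) ^ (N - 1) * |p.2 ^ j * K p * exp (y * p.2)| * exp (t * p.1)) := by
  refine (hint t y).mono' (by fun_prop) (ae_of_all _ fun p => ?_)
  rw [Real.norm_eq_abs, abs_of_nonneg (by positivity), abs_mul, abs_mul, abs_pow, abs_exp, exp_add]
  calc (1 + |p.1|) ^ (N - 1) * (|p.2| ^ j * |K p| * exp (y * p.2)) * exp (t * p.1)
      = (1 + |p.1|) ^ (N - 1) * |p.2| ^ j * |K p| * (exp (t * p.1) * exp (y * p.2)) := by ring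
    _ ≤ _ := by gcongr; exact abs_pow_le_one_add_abs_pow hj _

theorem iteratedDeriv_laplace_snd {j : ℕ} (hj : j ≤ N - 1) (x y : ℝ) :
    iteratedDeriv j (fun y' => ∫ p : ℝ × ℝ, K p * exp (x * p.1 + y' * p.2)) y =
      laplaceMoment volume Prod.fst (fun p => p.2 ^ j * K p * exp (y * p.2)) 0 x := by
  rw [laplace_eq_laplaceMoment_snd, iteratedDeriv_laplaceMoment measurable_snd (by fun_prop)
    (integrable_laplace_bound_snd hK hint x) hj]
  refine integral_congr_ae (ae_of_all _ fun p => ?_)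
  simp only [pow_zero, one_mul]
  ring

theorem iteratedDeriv_iteratedDeriv_laplace {i j : ℕ} (hi : i ≤ N - 1) (hj : j ≤ N - 1)
    (x y : ℝ) :
    iteratedDeriv i
        (fun x' => iteratedDeriv j (fun y' => ∫ p : ℝ × ℝ, K p * exp (x' * p.1 + y' * p.2)) y) x =
      ∫ p : ℝ × ℝ, p.1 ^ i * p.2 ^ j * K p * exp (x * p.1 + y * p.2) := by
  simp_rw [iteratedDeriv_laplace_snd hK hint hj]
  rw [iteratedDeriv_laplaceMoment measurable_fst (by fun_prop)
    (integrable_laplace_bound_fst hK hint hj y) hi]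
  exact integral_congr_ae (ae_of_all _ (pow_mul_mul_exp_eq_mul_exp_add K i j x y))

theorem contDiff_laplace_snd (x : ℝ) :
    ContDiff ℝ (N - 1 : ℕ) (fun y => ∫ p : ℝ × ℝ, K p * exp (x * p.1 + y * p.2)) := by
  rw [laplace_eq_laplaceMoment_snd]
  exact contDiff_laplaceMoment measurable_snd (by fun_prop) (integrable_laplace_bound_snd hK hint x)

theorem contDiff_iteratedDeriv_laplace_snd {j : ℕ} (hj : j ≤ N - 1) (y : ℝ) :
    ContDiff ℝ (N - 1 : ℕ)
      (fun x => iteratedDeriv j (fun y' => ∫ p : ℝ × ℝ, K p * exp (x * p.1 + y' * p.2)) y) := by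
  simp_rw [iteratedDeriv_laplace_snd hK hint hj]
  exact contDiff_laplaceMoment measurable_fst (by fun_prop)
    (integrable_laplace_bound_fst hK hint hj y)

theorem integrable_pow_mul_pow_mul_exp {i j : ℕ} (hi : i ≤ N - 1) (hj : j ≤ N - 1) (x y : ℝ) :
    Integrable (fun p : ℝ × ℝ => p.1 ^ i * p.2 ^ j * K p * exp (x * p.1 + y * p.2)) :=
  (integrable_pow_mul_mul_exp measurable_fst (by fun_prop)
    (integrable_laplace_bound_fst hK hint hj y) hi x).congr
    (ae_of_all _ (pow_mul_mul_exp_eq_mul_exp_add K i j x y))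

end TwoSidedLaplace

theorem stmt6_general (N : ℕ) (K : ℝ × ℝ → ℝ) (hK : Measurable K)
    (hint : ∀ x y : ℝ, Integrable (fun p : ℝ × ℝ =>
      (1 + |p.1|) ^ (N - 1) * (1 + |p.2|) ^ (N - 1) * |K p| *
        Real.exp (x * p.1 + y * p.2)))
    (h : ℝ → ℝ → ℝ)
    (hdef : ∀ x y, h x y = ∫ p : ℝ × ℝ, K p * Real.exp (x * p.1 + y * p.2)) :
    (∀ x : ℝ, ContDiff ℝ ((N - 1 : ℕ) : ℕ∞) (fun y => h x y)) ∧
    (∀ j : ℕ, j ≤ N - 1 → ∀ y : ℝ,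
      ContDiff ℝ ((N - 1 : ℕ) : ℕ∞)
        (fun x => iteratedDeriv j (fun y' => h x y') y)) ∧
    (∀ i j : ℕ, i ≤ N - 1 → j ≤ N - 1 → ∀ x y : ℝ,
      iteratedDeriv i (fun x' => iteratedDeriv j (fun y' => h x' y') y) x =
        ∫ p : ℝ × ℝ, p.1 ^ i * p.2 ^ j * K p * Real.exp (x * p.1 + y * p.2)) ∧
    (∀ x y : ℝ,
      (1 / (N.factorial : ℝ)) *
          ∫ lam : Fin N → ℝ, ∫ mu : Fin N → ℝ,
            vdm lam * vdm mu *
              ∏ k : Fin N, (K (lam k, mu k) * Real.exp (x * lam k + y * mu k)) =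
        Matrix.det (Matrix.of fun i j : Fin N =>
          iteratedDeriv (i : ℕ)
            (fun x' => iteratedDeriv (j : ℕ) (fun y' => h x' y') y) x)) := by
  obtain rfl : h = fun x y => ∫ p : ℝ × ℝ, K p * exp (x * p.1 + y * p.2) := funext₂ hdef
  beta_reduce
  have hderiv := fun i j (hi : i ≤ N - 1) (hj : j ≤ N - 1) =>
    iteratedDeriv_iteratedDeriv_laplace hK hint hi hj
  refine ⟨contDiff_laplace_snd hK hint, fun j hj => contDiff_iteratedDeriv_laplace_snd hK hint hj,
    hderiv, fun x y => ?_⟩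
  have hfin : ∀ i : Fin N, (i : ℕ) ≤ N - 1 := fun i => Nat.le_sub_one_of_lt i.2
  have hAndreief := integral_det_mul_det_mul_prod (μ := volume) (ν := volume)
    (fun (i : Fin N) (a : ℝ) => a ^ (i : ℕ)) (fun j b => b ^ (j : ℕ))
    (fun p => K p * exp (x * p.1 + y * p.2)) fun i j =>
      (integrable_pow_mul_pow_mul_exp hK hint (hfin i) (hfin j) x y).congr
        (ae_of_all _ fun p => mul_assoc _ _ _)
  simp only [← volume_pi, ← Measure.volume_eq_prod, Fintype.card_fin, ← mul_assoc] at hAndreief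
  simp_rw [hderiv _ _ (hfin _) (hfin _), vdm_eq_det, hAndreief]
  field_simp

theorem stmt6 (N : ℕ) (hN : 1 ≤ N) (K : ℝ × ℝ → ℝ) (hK : Measurable K)
    (hint : ∀ x y : ℝ, Integrable (fun p : ℝ × ℝ =>
      (1 + |p.1|) ^ (N - 1) * (1 + |p.2|) ^ (N - 1) * |K p| *
        Real.exp (x * p.1 + y * p.2)))
    (h : ℝ → ℝ → ℝ)
    (hdef : ∀ x y, h x y = ∫ p : ℝ × ℝ, K p * Real.exp (x * p.1 + y * p.2)) :
    (∀ x : ℝ, ContDiff ℝ ((N - 1 : ℕ) : ℕ∞) (fun y => h x y)) ∧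
    (∀ j : ℕ, j ≤ N - 1 → ∀ y : ℝ,
      ContDiff ℝ ((N - 1 : ℕ) : ℕ∞)
        (fun x => iteratedDeriv j (fun y' => h x y') y)) ∧
    (∀ i j : ℕ, i ≤ N - 1 → j ≤ N - 1 → ∀ x y : ℝ,
      iteratedDeriv i (fun x' => iteratedDeriv j (fun y' => h x' y') y) x =
        ∫ p : ℝ × ℝ, p.1 ^ i * p.2 ^ j * K p * Real.exp (x * p.1 + y * p.2)) ∧
    (∀ x y : ℝ,
      (1 / (N.factorial : ℝ)) *
          ∫ lam : Fin N → ℝ, ∫ mu : Fin N → ℝ,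
            vdm lam * vdm mu *
              ∏ k : Fin N, (K (lam k, mu k) * Real.exp (x * lam k + y * mu k)) =
        Matrix.det (Matrix.of fun i j : Fin N =>
          iteratedDeriv (i : ℕ)
            (fun x' => iteratedDeriv (j : ℕ) (fun y' => h x' y') y) x)) :=
  stmt6_general N K hK hint h hdef
end

section
/- Let f be a smooth real-valued function on an open set U ⊆ ℝ², let M ≥ 2, define τ_n(x,y) := det( ∂_x^{i−1}∂_y^{j−1} f(x,y) )_{i,j=1,…,n} for n ≥ 1 and τ_0 := 1, and assume τ_n > 0 on U for all 0 ≤ n ≤ M. Set ψ_n := ln τ_n (so ψ_0 = 0). Then for every 1 ≤ n ≤ M−1 and every (x,y) ∈ U: ∂_x∂_y ψ_n = exp( ψ_{n+1} + ψ_{n−1} − 2ψ_n ). (These are the two-dimensional Toda lattice equations of motion generated on a Darboux–Bäcklund orbit, with the Wronskian solution ψ_n = ln τ_n.) -/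
/-- The mixed partial derivative `∂_x^i ∂_y^j f` of a function of two real variables. -/
noncomputable def pdxy (f : ℝ → ℝ → ℝ) (i j : ℕ) (x y : ℝ) : ℝ :=
  iteratedDeriv i (fun x' => iteratedDeriv j (f x') y) x

/-- The two-variable Wronskian `τ_n(x,y) = det( ∂_x^{i-1}∂_y^{j-1} f(x,y) )_{i,j=1,…,n}`,
with `τ_0 = 1`. -/
noncomputable def tau2 (f : ℝ → ℝ → ℝ) (n : ℕ) (x y : ℝ) : ℝ :=
  Matrix.det (Matrix.of fun i j : Fin n => pdxy f (i : ℕ) (j : ℕ) x y)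


open scoped ContDiff
open Finset

/-- index map: last index `m` of `Fin (m+1)` gets replaced by `c`. -/
def bix (m c : ℕ) (i : Fin (m + 1)) : ℕ := if (i : ℕ) = m then c else i


/-- Derivative of a determinant, column form. -/
lemma hasDerivAt_det_col {n : ℕ} (A : ℝ → Matrix (Fin n) (Fin n) ℝ)
    (A' : Matrix (Fin n) (Fin n) ℝ) (t : ℝ)
    (h : ∀ i j, HasDerivAt (fun s => A s i j) (A' i j) t) :
    HasDerivAt (fun s => (A s).det)
      (∑ j, ((A t).updateCol j (fun r => A' r j)).det) t := by
  have key : ∀ σ : Equiv.Perm (Fin n),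
      HasDerivAt (fun s => ∏ i, A s (σ i) i)
        (∑ j, (∏ i ∈ univ.erase j, A t (σ i) i) * A' (σ j) j) t := by
    intro σ
    simpa [smul_eq_mul] using
      HasDerivAt.fun_finsetProd (x := t) (u := (univ : Finset (Fin n)))
        (f := fun i s => A s (σ i) i) (f' := fun i => A' (σ i) i)
        (fun i _ => h (σ i) i)
  have H : HasDerivAt (fun s => (A s).det)
      (∑ σ : Equiv.Perm (Fin n), ((Equiv.Perm.sign σ : ℤ) : ℝ) *
        (∑ j, (∏ i ∈ univ.erase j, A t (σ i) i) * A' (σ j) j)) t := by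
    have : (fun s => (A s).det)
        = fun s => ∑ σ : Equiv.Perm (Fin n), ((Equiv.Perm.sign σ : ℤ) : ℝ) *
            ∏ i, A s (σ i) i := by
      funext s; exact Matrix.det_apply' (A s)
    rw [this]
    exact HasDerivAt.fun_sum fun σ _ => (key σ).const_mul _
  convert H using 1
  have upd : ∀ (j : Fin n) (σ : Equiv.Perm (Fin n)),
      (∏ i, (A t).updateCol j (fun r => A' r j) (σ i) i)
        = A' (σ j) j * ∏ i ∈ univ.erase j, A t (σ i) i := by
    intro j σ
    rw [← Finset.mul_prod_erase univ _ (Finset.mem_univ j)]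
    congr 1
    · simp [Matrix.updateCol_apply]
    · exact Finset.prod_congr rfl fun i hi => by
        simp [Matrix.updateCol_apply, (Finset.mem_erase.mp hi).1]
  simp only [Matrix.det_apply', upd]
  rw [Finset.sum_comm]
  refine Finset.sum_congr rfl fun σ _ => ?_
  rw [Finset.mul_sum]
  exact Finset.sum_congr rfl fun j _ => by ring

/-- Derivative of a determinant, row form. -/
lemma hasDerivAt_det_row {n : ℕ} (A : ℝ → Matrix (Fin n) (Fin n) ℝ)
    (A' : Matrix (Fin n) (Fin n) ℝ) (t : ℝ)
    (h : ∀ i j, HasDerivAt (fun s => A s i j) (A' i j) t) :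
    HasDerivAt (fun s => (A s).det)
      (∑ i, ((A t).updateRow i (A' i)).det) t := by
  have := hasDerivAt_det_col (fun s => (A s).transpose) (A').transpose t
    (fun i j => h j i)
  simp only [Matrix.det_transpose] at this
  convert this using 2 with i
  rw [← Matrix.det_transpose]
  congr 1
  rw [Matrix.updateCol_transpose]
  rfl


lemma finSum_symm_low {m k : ℕ} (i : Fin (m + k)) (h : (i : ℕ) < m) :
    finSumFinEquiv.symm i = Sum.inl ⟨(i : ℕ), h⟩ := by
  rw [Equiv.symm_apply_eq]
  exact Fin.ext (by simp)

lemma finSum_symm_high {m k : ℕ} (i : Fin (m + k)) (h : m ≤ (i : ℕ)) :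
    finSumFinEquiv.symm i = Sum.inr ⟨(i : ℕ) - m, by omega⟩ := by
  rw [Equiv.symm_apply_eq]
  exact Fin.ext (by simp; omega)

/-- bordered-determinant scalar correction term -/
def brd (m : ℕ) (a : ℕ → ℕ → ℝ) (Q : Matrix (Fin m) (Fin m) ℝ) (c d : ℕ) : ℝ :=
  ∑ j : Fin m, (∑ i : Fin m, a c i * Q i j) * a j d

lemma bordered_det (m : ℕ) (a : ℕ → ℕ → ℝ)
    [Invertible (Matrix.of fun i j : Fin m => a i j)] (c d : ℕ) :
    (Matrix.of fun i j : Fin (m + 1) => a (bix m c i) (bix m d j)).det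
      = (Matrix.of fun i j : Fin m => a i j).det *
        (a c d - brd m a (⅟(Matrix.of fun i j : Fin m => a i j)) c d) := by
  have hmat : (Matrix.of fun i j : Fin (m + 1) => a (bix m c i) (bix m d j))
      = (Matrix.fromBlocks (Matrix.of fun i j : Fin m => a i j)
          (Matrix.of fun (i : Fin m) (_ : Fin 1) => a i d)
          (Matrix.of fun (_ : Fin 1) (j : Fin m) => a c j)
          (Matrix.of fun (_ : Fin 1) (_ : Fin 1) => a c d)).submatrix
          finSumFinEquiv.symm finSumFinEquiv.symm := by
    funext i j
    rcases lt_or_ge (i : ℕ) m with hi | hi <;> rcases lt_or_ge (j : ℕ) m with hj | hj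
    · rw [Matrix.submatrix_apply, finSum_symm_low i hi, finSum_symm_low j hj,
        Matrix.fromBlocks_apply₁₁]
      simp only [Matrix.of_apply, bix]
      rw [if_neg (by omega), if_neg (by omega)]
    · rw [Matrix.submatrix_apply, finSum_symm_low i hi, finSum_symm_high j hj,
        Matrix.fromBlocks_apply₁₂]
      simp only [Matrix.of_apply, bix]
      rw [if_neg (by omega), if_pos (by omega)]
    · rw [Matrix.submatrix_apply, finSum_symm_high i hi, finSum_symm_low j hj,
        Matrix.fromBlocks_apply₂₁]
      simp only [Matrix.of_apply, bix]
      rw [if_pos (by omega), if_neg (by omega)]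
    · rw [Matrix.submatrix_apply, finSum_symm_high i hi, finSum_symm_high j hj,
        Matrix.fromBlocks_apply₂₂]
      simp only [Matrix.of_apply, bix]
      rw [if_pos (by omega), if_pos (by omega)]
  rw [hmat, Matrix.det_submatrix_equiv_self, Matrix.det_fromBlocks₁₁, Matrix.det_fin_one]
  congr 1

lemma jacobi_det (m : ℕ) (a : ℕ → ℕ → ℝ)
    (hP : (Matrix.of fun i j : Fin m => a i j).det ≠ 0) :
    (Matrix.of fun i j : Fin (m + 2) => a i j).det *
        (Matrix.of fun i j : Fin m => a i j).det =
      (Matrix.of fun i j : Fin (m + 1) => a i j).det *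
        (Matrix.of fun i j : Fin (m + 1) => a (bix m (m+1) i) (bix m (m+1) j)).det -
      (Matrix.of fun i j : Fin (m + 1) => a (bix m (m+1) i) j).det *
        (Matrix.of fun i j : Fin (m + 1) => a i (bix m (m+1) j)).det := by
  letI : Invertible (Matrix.of fun i j : Fin m => a i j) :=
    (Matrix.of fun i j : Fin m => a i j).invertibleOfIsUnitDet
      (isUnit_iff_ne_zero.mpr hP)
  set Q := ⅟(Matrix.of fun i j : Fin m => a i j) with hQ
  -- the big (m+2) determinant via a 2x2 Schur complement
  have hbig : (Matrix.of fun i j : Fin (m + 2) => a i j).det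
      = (Matrix.of fun i j : Fin m => a i j).det *
        ((a m m - brd m a Q m m) * (a (m+1) (m+1) - brd m a Q (m+1) (m+1)) -
         (a m (m+1) - brd m a Q m (m+1)) * (a (m+1) m - brd m a Q (m+1) m)) := by
    have hmat : (Matrix.of fun i j : Fin (m + 2) => a i j)
        = (Matrix.fromBlocks (Matrix.of fun i j : Fin m => a i j)
            (Matrix.of fun (i : Fin m) (k : Fin 2) => a i (m + k))
            (Matrix.of fun (k : Fin 2) (j : Fin m) => a (m + k) j)
            (Matrix.of fun (k l : Fin 2) => a (m + k) (m + l))).submatrix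
            finSumFinEquiv.symm finSumFinEquiv.symm := by
      funext i j
      rcases lt_or_ge (i : ℕ) m with hi | hi <;> rcases lt_or_ge (j : ℕ) m with hj | hj
      · rw [Matrix.submatrix_apply, finSum_symm_low i hi, finSum_symm_low j hj,
          Matrix.fromBlocks_apply₁₁]
        rfl
      · rw [Matrix.submatrix_apply, finSum_symm_low i hi, finSum_symm_high j hj,
          Matrix.fromBlocks_apply₁₂]
        simp only [Matrix.of_apply]
        congr 1; omega
      · rw [Matrix.submatrix_apply, finSum_symm_high i hi, finSum_symm_low j hj,
          Matrix.fromBlocks_apply₂₁]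
        simp only [Matrix.of_apply]
        congr 1; omega
      · rw [Matrix.submatrix_apply, finSum_symm_high i hi, finSum_symm_high j hj,
          Matrix.fromBlocks_apply₂₂]
        simp only [Matrix.of_apply]
        congr 1 <;> omega
    rw [hmat, Matrix.det_submatrix_equiv_self, Matrix.det_fromBlocks₁₁, Matrix.det_fin_two]
    congr 1
  have h00 := bordered_det m a (c := m) (d := m)
  have h01 := bordered_det m a (c := m) (d := m + 1)
  have h10 := bordered_det m a (c := m + 1) (d := m)
  have h11 := bordered_det m a (c := m + 1) (d := m + 1)
  have hid : ∀ i : Fin (m + 1), bix m m i = (i : ℕ) := by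
    intro i; unfold bix; split <;> omega
  have hfix : (Matrix.of fun i j : Fin (m + 1) => a (bix m m i) (bix m m j))
      = (Matrix.of fun i j : Fin (m + 1) => a i j) := by
    funext i j; simp only [Matrix.of_apply, hid]
  have hfixr : (Matrix.of fun i j : Fin (m + 1) => a (bix m (m+1) i) (bix m m j))
      = (Matrix.of fun i j : Fin (m + 1) => a (bix m (m+1) i) j) := by
    funext i j; simp only [Matrix.of_apply, hid]
  have hfixc : (Matrix.of fun i j : Fin (m + 1) => a (bix m m i) (bix m (m+1) j))
      = (Matrix.of fun i j : Fin (m + 1) => a i (bix m (m+1) j)) := by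
    funext i j; simp only [Matrix.of_apply, hid]
  rw [hfix] at h00
  rw [hfixr] at h10
  rw [hfixc] at h01
  rw [hbig, h00, h01, h10, h11, ← hQ]
  ring

noncomputable def Dx (G : ℝ × ℝ → ℝ) : ℝ × ℝ → ℝ :=
  fun p => deriv (fun x => G (x, p.2)) p.1

noncomputable def Dy (G : ℝ × ℝ → ℝ) : ℝ × ℝ → ℝ :=
  fun p => deriv (fun y => G (p.1, y)) p.2

section slices

variable {F : Type*} [NormedAddCommGroup F] [NormedSpace ℝ F]

lemma hasDerivAt_sliceX {G : ℝ × ℝ → F} {x y : ℝ} (hG : DifferentiableAt ℝ G (x, y)) :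
    HasDerivAt (fun x' => G (x', y)) (fderiv ℝ G (x, y) (1, 0)) x :=
  hG.hasFDerivAt.comp_hasDerivAt x ((hasDerivAt_id x).prodMk (hasDerivAt_const x y))

lemma hasDerivAt_sliceY {G : ℝ × ℝ → F} {x y : ℝ} (hG : DifferentiableAt ℝ G (x, y)) :
    HasDerivAt (fun y' => G (x, y')) (fderiv ℝ G (x, y) (0, 1)) y :=
  hG.hasFDerivAt.comp_hasDerivAt y ((hasDerivAt_const y x).prodMk (hasDerivAt_id y))

end slices

lemma Dx_eq_fderiv {G : ℝ × ℝ → ℝ} {x y : ℝ} (hG : DifferentiableAt ℝ G (x, y)) :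
    Dx G (x, y) = fderiv ℝ G (x, y) (1, 0) :=
  (hasDerivAt_sliceX hG).deriv

lemma Dy_eq_fderiv {G : ℝ × ℝ → ℝ} {x y : ℝ} (hG : DifferentiableAt ℝ G (x, y)) :
    Dy G (x, y) = fderiv ℝ G (x, y) (0, 1) :=
  (hasDerivAt_sliceY hG).deriv

variable {s : Set (ℝ × ℝ)}

lemma diffAt_of_contDiffOn {G : ℝ × ℝ → ℝ} (hs : IsOpen s) (hG : ContDiffOn ℝ ∞ G s)
    {p : ℝ × ℝ} (hp : p ∈ s) : DifferentiableAt ℝ G p :=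
  (hG.contDiffAt (hs.mem_nhds hp)).differentiableAt (by norm_num)

lemma contDiffOn_fderiv_apply {G : ℝ × ℝ → ℝ} (hs : IsOpen s) (hG : ContDiffOn ℝ ∞ G s)
    (v : ℝ × ℝ) : ContDiffOn ℝ ∞ (fun p => fderiv ℝ G p v) s :=
  (ContinuousLinearMap.apply ℝ ℝ v).contDiff.comp_contDiffOn
    (hG.fderiv_of_isOpen hs (by norm_num))

lemma contDiffOn_Dx {G : ℝ × ℝ → ℝ} (hs : IsOpen s) (hG : ContDiffOn ℝ ∞ G s) :
    ContDiffOn ℝ ∞ (Dx G) s :=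
  (contDiffOn_fderiv_apply hs hG (1, 0)).congr fun p hp =>
    Dx_eq_fderiv (x := p.1) (y := p.2) (diffAt_of_contDiffOn hs hG hp)

lemma contDiffOn_Dy {G : ℝ × ℝ → ℝ} (hs : IsOpen s) (hG : ContDiffOn ℝ ∞ G s) :
    ContDiffOn ℝ ∞ (Dy G) s :=
  (contDiffOn_fderiv_apply hs hG (0, 1)).congr fun p hp =>
    Dy_eq_fderiv (x := p.1) (y := p.2) (diffAt_of_contDiffOn hs hG hp)

/-- slice-wise eventual equality in the `y` variable -/
lemma sliceY_eventuallyEq {A B : ℝ × ℝ → ℝ} (hs : IsOpen s) (hAB : ∀ q ∈ s, A q = B q)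
    {x y : ℝ} (hp : (x, y) ∈ s) :
    (fun y' => A (x, y')) =ᶠ[nhds y] fun y' => B (x, y') := by
  have hcont : ContinuousAt (fun y' : ℝ => (x, y')) y := by fun_prop
  filter_upwards [hcont.preimage_mem_nhds (hs.mem_nhds hp)] with y' hy'
  exact hAB _ hy'

lemma sliceX_eventuallyEq {A B : ℝ × ℝ → ℝ} (hs : IsOpen s) (hAB : ∀ q ∈ s, A q = B q)
    {x y : ℝ} (hp : (x, y) ∈ s) :
    (fun x' => A (x', y)) =ᶠ[nhds x] fun x' => B (x', y) := by
  have hcont : ContinuousAt (fun x' : ℝ => (x', y)) x := by fun_prop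
  filter_upwards [hcont.preimage_mem_nhds (hs.mem_nhds hp)] with x' hx'
  exact hAB _ hx'

lemma Dx_congr_on {A B : ℝ × ℝ → ℝ} (hs : IsOpen s) (hAB : ∀ q ∈ s, A q = B q)
    {p : ℝ × ℝ} (hp : p ∈ s) : Dx A p = Dx B p :=
  (sliceX_eventuallyEq hs hAB (x := p.1) (y := p.2) hp).deriv_eq

/-- Schwarz symmetry of mixed partials for a smooth function on an open set. -/
lemma Dy_Dx_comm {G : ℝ × ℝ → ℝ} (hs : IsOpen s) (hG : ContDiffOn ℝ ∞ G s)
    {p : ℝ × ℝ} (hp : p ∈ s) : Dy (Dx G) p = Dx (Dy G) p := by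
  obtain ⟨x, y⟩ := p
  have hdiff : ∀ q ∈ s, DifferentiableAt ℝ G q := fun q hq => diffAt_of_contDiffOn hs hG hq
  have hf'CD : ContDiffOn ℝ ∞ (fderiv ℝ G) s := hG.fderiv_of_isOpen hs (by norm_num)
  have hf'diff : DifferentiableAt ℝ (fderiv ℝ G) (x, y) :=
    (hf'CD.contDiffAt (hs.mem_nhds hp)).differentiableAt (by norm_num)
  set f'' := fderiv ℝ (fderiv ℝ G) (x, y) with hf''def
  have hsym : f'' (0, 1) (1, 0) = f'' (1, 0) (0, 1) :=
    second_derivative_symmetric_of_eventually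
      (Filter.eventually_of_mem (hs.mem_nhds hp) fun q hq => (hdiff q hq).hasFDerivAt)
      hf'diff.hasFDerivAt (0, 1) (1, 0)
  have hDx : Dy (Dx G) (x, y) = f'' (0, 1) (1, 0) := by
    have hev : (fun y' => Dx G (x, y')) =ᶠ[nhds y]
        fun y' => fderiv ℝ G (x, y') (1, 0) :=
      sliceY_eventuallyEq hs (fun q hq => Dx_eq_fderiv (x := q.1) (y := q.2) (hdiff q hq)) hp
    have hd : HasDerivAt (fun y' => fderiv ℝ G (x, y') (1, 0)) (f'' (0, 1) (1, 0)) y := by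
      have h1 : HasDerivAt (fun y' => fderiv ℝ G (x, y')) (f'' (0, 1)) y :=
        hasDerivAt_sliceY hf'diff
      exact ((ContinuousLinearMap.apply ℝ ℝ ((1 : ℝ), (0 : ℝ))).hasFDerivAt.comp_hasDerivAt
        y h1)
    show deriv (fun y' => Dx G (x, y')) y = _
    rw [hev.deriv_eq]
    exact hd.deriv
  have hDy : Dx (Dy G) (x, y) = f'' (1, 0) (0, 1) := by
    have hev : (fun x' => Dy G (x', y)) =ᶠ[nhds x]
        fun x' => fderiv ℝ G (x', y) (0, 1) :=
      sliceX_eventuallyEq hs (fun q hq => Dy_eq_fderiv (x := q.1) (y := q.2) (hdiff q hq)) hp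
    have hd : HasDerivAt (fun x' => fderiv ℝ G (x', y) (0, 1)) (f'' (1, 0) (0, 1)) x := by
      have h1 : HasDerivAt (fun x' => fderiv ℝ G (x', y)) (f'' (1, 0)) x :=
        hasDerivAt_sliceX hf'diff
      exact ((ContinuousLinearMap.apply ℝ ℝ ((0 : ℝ), (1 : ℝ))).hasFDerivAt.comp_hasDerivAt
        x h1)
    show deriv (fun x' => Dy G (x', y)) x = _
    rw [hev.deriv_eq]
    exact hd.deriv
  rw [hDx, hDy, hsym]

/-- iterated partials of a smooth base function -/
lemma contDiffOn_iter {G : ℝ × ℝ → ℝ} (hs : IsOpen s) (hG : ContDiffOn ℝ ∞ G s)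
    (i j : ℕ) : ContDiffOn ℝ ∞ (Dx^[i] (Dy^[j] G)) s := by
  have hy : ContDiffOn ℝ ∞ (Dy^[j] G) s := by
    induction j with
    | zero => exact hG
    | succ j ih => rw [Function.iterate_succ_apply']; exact contDiffOn_Dy hs ih
  induction i with
  | zero => exact hy
  | succ i ih => rw [Function.iterate_succ_apply']; exact contDiffOn_Dx hs ih

lemma Dy_iter_comm {G : ℝ × ℝ → ℝ} (hs : IsOpen s) (hG : ContDiffOn ℝ ∞ G s)
    (i j : ℕ) {p : ℝ × ℝ} (hp : p ∈ s) :
    Dy (Dx^[i] (Dy^[j] G)) p = Dx^[i] (Dy^[j + 1] G) p := by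
  induction i generalizing p with
  | zero =>
    simp only [Function.iterate_zero, id_eq]
    rw [Function.iterate_succ_apply']
  | succ i ih =>
    rw [Function.iterate_succ_apply' Dx i]
    rw [Dy_Dx_comm hs (contDiffOn_iter hs hG i j) hp]
    rw [Function.iterate_succ_apply' Dx i (Dy^[j+1] G)]
    exact Dx_congr_on hs (fun q hq => ih hq) hp

lemma hasDerivAt_iter_X {G : ℝ × ℝ → ℝ} (hs : IsOpen s) (hG : ContDiffOn ℝ ∞ G s)
    (i j : ℕ) {x y : ℝ} (hp : (x, y) ∈ s) :
    HasDerivAt (fun x' => Dx^[i] (Dy^[j] G) (x', y))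
      (Dx^[i + 1] (Dy^[j] G) (x, y)) x := by
  have hdiff : DifferentiableAt ℝ (Dx^[i] (Dy^[j] G)) (x, y) :=
    diffAt_of_contDiffOn hs (contDiffOn_iter hs hG i j) hp
  have h := hasDerivAt_sliceX hdiff
  have : Dx^[i + 1] (Dy^[j] G) (x, y) = fderiv ℝ (Dx^[i] (Dy^[j] G)) (x, y) (1, 0) := by
    rw [Function.iterate_succ_apply']
    exact Dx_eq_fderiv hdiff
  rw [this]
  exact h

lemma hasDerivAt_iter_Y {G : ℝ × ℝ → ℝ} (hs : IsOpen s) (hG : ContDiffOn ℝ ∞ G s)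
    (i j : ℕ) {x y : ℝ} (hp : (x, y) ∈ s) :
    HasDerivAt (fun y' => Dx^[i] (Dy^[j] G) (x, y'))
      (Dx^[i] (Dy^[j + 1] G) (x, y)) y := by
  have hdiff : DifferentiableAt ℝ (Dx^[i] (Dy^[j] G)) (x, y) :=
    diffAt_of_contDiffOn hs (contDiffOn_iter hs hG i j) hp
  have h := hasDerivAt_sliceY hdiff
  have : Dx^[i] (Dy^[j + 1] G) (x, y) = fderiv ℝ (Dx^[i] (Dy^[j] G)) (x, y) (0, 1) := by
    rw [← Dy_iter_comm hs hG i j hp]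
    exact Dy_eq_fderiv hdiff
  rw [this]
  exact h

/-- identification of `pdxy` with the iterated slice derivatives -/
lemma pdxy_eq_iter (f : ℝ → ℝ → ℝ) (i j : ℕ) (x y : ℝ) :
    pdxy f i j x y = Dx^[i] (Dy^[j] (fun p : ℝ × ℝ => f p.1 p.2)) (x, y) := by
  have hy : ∀ (j : ℕ) (x y : ℝ),
      Dy^[j] (fun p : ℝ × ℝ => f p.1 p.2) (x, y) = iteratedDeriv j (f x) y := by
    intro j
    induction j with
    | zero => intro x y; simp [iteratedDeriv_zero]
    | succ j ih =>
      intro x y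
      rw [Function.iterate_succ_apply', iteratedDeriv_succ]
      show deriv (fun y' => Dy^[j] (fun p : ℝ × ℝ => f p.1 p.2) (x, y')) y = _
      congr 1
      funext y'
      exact ih x y'
  have hx : ∀ (i : ℕ) (H : ℝ × ℝ → ℝ) (x y : ℝ),
      Dx^[i] H (x, y) = iteratedDeriv i (fun x' => H (x', y)) x := by
    intro i
    induction i with
    | zero => intro H x y; simp [iteratedDeriv_zero]
    | succ i ih =>
      intro H x y
      rw [Function.iterate_succ_apply' Dx i H, iteratedDeriv_succ]
      show deriv (fun x' => Dx^[i] H (x', y)) x = _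
      congr 1
      funext x'
      exact ih H x' y
  rw [hx i _ x y]
  unfold pdxy
  congr 1
  funext x'
  rw [hy j x' y]


lemma colsum_det (m : ℕ) (g : ℕ → ℕ → ℝ) :
    ∑ j : Fin (m + 1), ((Matrix.of fun i j : Fin (m + 1) => g i j).updateCol j
        (fun i : Fin (m + 1) => g i ((j : ℕ) + 1))).det
      = (Matrix.of fun i j : Fin (m + 1) => g i (bix m (m + 1) j)).det := by
  rw [Finset.sum_eq_single (Fin.last m)]
  · congr 1
    funext i j
    rw [Matrix.updateCol_apply]
    by_cases hj : j = Fin.last m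
    · rw [if_pos hj]
      simp only [Matrix.of_apply, bix]
      rw [if_pos (by simp [hj])]
      subst hj; simp
    · rw [if_neg hj]
      simp only [Matrix.of_apply, bix]
      rw [if_neg (by simpa [Fin.ext_iff] using hj)]
  · intro j _ hj
    have hjm : (j : ℕ) < m := by
      have h1 := j.isLt
      have h2 : (j : ℕ) ≠ m := by simpa [Fin.ext_iff] using hj
      omega
    apply Matrix.det_zero_of_column_eq
      (show j ≠ (⟨(j : ℕ) + 1, by omega⟩ : Fin (m + 1)) from by
        simp [Fin.ext_iff])
    intro k
    rw [Matrix.updateCol_apply, Matrix.updateCol_apply, if_pos rfl,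
      if_neg (by simp [Fin.ext_iff])]
    rfl
  · intro h; exact absurd (Finset.mem_univ _) h

lemma rowsum_det (m : ℕ) (g : ℕ → ℕ → ℝ) (cs : Fin (m + 1) → ℕ) :
    ∑ i : Fin (m + 1), ((Matrix.of fun i j : Fin (m + 1) => g i (cs j)).updateRow i
        (fun j : Fin (m + 1) => g ((i : ℕ) + 1) (cs j))).det
      = (Matrix.of fun i j : Fin (m + 1) => g (bix m (m + 1) i) (cs j)).det := by
  rw [Finset.sum_eq_single (Fin.last m)]
  · congr 1
    funext i j
    rw [Matrix.updateRow_apply]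
    by_cases hi : i = Fin.last m
    · rw [if_pos hi]
      simp only [Matrix.of_apply, bix]
      rw [if_pos (by simp [hi])]
      subst hi; simp
    · rw [if_neg hi]
      simp only [Matrix.of_apply, bix]
      rw [if_neg (by simpa [Fin.ext_iff] using hi)]
  · intro i _ hi
    have him : (i : ℕ) < m := by
      have h1 := i.isLt
      have h2 : (i : ℕ) ≠ m := by simpa [Fin.ext_iff] using hi
      omega
    apply Matrix.det_zero_of_row_eq
      (show i ≠ (⟨(i : ℕ) + 1, by omega⟩ : Fin (m + 1)) from by
        simp [Fin.ext_iff])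
    rw [Matrix.updateRow_self, Matrix.updateRow_ne (by simp [Fin.ext_iff])]
    rfl
  · intro h; exact absurd (Finset.mem_univ _) h
theorem stmt13 (U : Set (ℝ × ℝ)) (hU : IsOpen U) (f : ℝ → ℝ → ℝ)
    (hf : ContDiffOn ℝ (⊤ : ℕ∞) (fun p : ℝ × ℝ => f p.1 p.2) U)
    (M : ℕ) (hM : 2 ≤ M)
    (hpos : ∀ n : ℕ, n ≤ M → ∀ x y : ℝ, (x, y) ∈ U → 0 < tau2 f n x y)
    (ψ : ℕ → ℝ → ℝ → ℝ) (hψ : ∀ n x y, ψ n x y = Real.log (tau2 f n x y)) :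
    ∀ n : ℕ, 1 ≤ n → n ≤ M - 1 → ∀ x y : ℝ, (x, y) ∈ U →
      deriv (fun x' => deriv (fun y' => ψ n x' y') y) x =
        Real.exp (ψ (n + 1) x y + ψ (n - 1) x y - 2 * ψ n x y) := by
  intro n hn1 hnM x₀ y₀ hxy
  obtain ⟨m, rfl⟩ : ∃ m, n = m + 1 := ⟨n - 1, by omega⟩
  have hm2 : m + 2 ≤ M := by omega
  set G : ℝ × ℝ → ℝ := fun p => f p.1 p.2 with hGdef
  have hG : ContDiffOn ℝ ∞ G U := hf.of_le (by simp)
  set Φ : ℕ → ℕ → ℝ × ℝ → ℝ := fun i j => Dx^[i] (Dy^[j] G) with hΦdef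
  have hΦ : ∀ (i j : ℕ) (x y : ℝ), pdxy f i j x y = Φ i j (x, y) := fun i j x y =>
    pdxy_eq_iter f i j x y
  have htau : ∀ (k : ℕ) (x y : ℝ),
      tau2 f k x y = (Matrix.of fun i j : Fin k => Φ (i : ℕ) (j : ℕ) (x, y)).det := by
    intro k x y
    unfold tau2
    congr 1
    funext i j
    simp only [Matrix.of_apply]
    exact hΦ i j x y
  obtain ⟨V, W, hVo, hWo, hxV, hyW, hVW⟩ := isOpen_prod_iff.mp hU x₀ y₀ hxy
  set T : ℝ × ℝ → ℝ :=
    fun p => (Matrix.of fun i j : Fin (m + 1) => Φ (i : ℕ) (j : ℕ) p).det with hTdef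
  set S : ℝ × ℝ → ℝ :=
    fun p => (Matrix.of fun i j : Fin (m + 1) => Φ (i : ℕ) (bix m (m + 1) j) p).det with hSdef
  set R : ℝ × ℝ → ℝ :=
    fun p => (Matrix.of fun i j : Fin (m + 1) => Φ (bix m (m + 1) i) (j : ℕ) p).det with hRdef
  set D2 : ℝ × ℝ → ℝ :=
    fun p => (Matrix.of fun i j : Fin (m + 1) =>
      Φ (bix m (m + 1) i) (bix m (m + 1) j) p).det with hD2def
  -- y-derivative of T
  have claimA : ∀ x' y' : ℝ, (x', y') ∈ U →
      HasDerivAt (fun y'' => T (x', y'')) (S (x', y')) y' := by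
    intro x' y' hmem
    have h := hasDerivAt_det_col
      (fun s => Matrix.of fun i j : Fin (m + 1) => Φ (i : ℕ) (j : ℕ) (x', s))
      (Matrix.of fun i j : Fin (m + 1) => Φ (i : ℕ) ((j : ℕ) + 1) (x', y')) y'
      (fun i j => hasDerivAt_iter_Y hU hG (i : ℕ) (j : ℕ) hmem)
    have hsum := colsum_det m (fun i j => Φ i j (x', y'))
    rw [show S (x', y') = _ from (hsum).symm]
    exact h
  -- x-derivative of T
  have claimB : HasDerivAt (fun x' => T (x', y₀)) (R (x₀, y₀)) x₀ := by
    have h := hasDerivAt_det_row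
      (fun s => Matrix.of fun i j : Fin (m + 1) => Φ (i : ℕ) (j : ℕ) (s, y₀))
      (Matrix.of fun i j : Fin (m + 1) => Φ ((i : ℕ) + 1) (j : ℕ) (x₀, y₀)) x₀
      (fun i j => hasDerivAt_iter_X hU hG (i : ℕ) (j : ℕ) hxy)
    have hsum := rowsum_det m (fun i j => Φ i j (x₀, y₀)) (fun j => (j : ℕ))
    rw [show R (x₀, y₀) = _ from (hsum).symm]
    exact h
  -- x-derivative of S
  have claimC : HasDerivAt (fun x' => S (x', y₀)) (D2 (x₀, y₀)) x₀ := by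
    have h := hasDerivAt_det_row
      (fun s => Matrix.of fun i j : Fin (m + 1) => Φ (i : ℕ) (bix m (m + 1) j) (s, y₀))
      (Matrix.of fun i j : Fin (m + 1) =>
        Φ ((i : ℕ) + 1) (bix m (m + 1) j) (x₀, y₀)) x₀
      (fun i j => hasDerivAt_iter_X hU hG (i : ℕ) (bix m (m + 1) j) hxy)
    have hsum := rowsum_det m (fun i j => Φ i j (x₀, y₀)) (bix m (m + 1))
    rw [show D2 (x₀, y₀) = _ from (hsum).symm]
    exact h
  have hTpos : ∀ x' y' : ℝ, (x', y') ∈ U → 0 < T (x', y') := by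
    intro x' y' hmem
    have h := hpos (m + 1) (by omega) x' y' hmem
    rw [show tau2 f (m + 1) x' y' = T (x', y') from htau _ _ _] at h
    exact h
  -- inner derivative
  have key1 : ∀ x' ∈ V, deriv (fun y' => ψ (m + 1) x' y') y₀ = S (x', y₀) / T (x', y₀) := by
    intro x' hx'
    have hmem : (x', y₀) ∈ U := hVW ⟨hx', hyW⟩
    have heq : (fun y' => ψ (m + 1) x' y') = fun y' => Real.log (T (x', y')) := by
      funext y'
      rw [hψ, show tau2 f (m + 1) x' y' = T (x', y') from htau _ _ _]
    rw [heq]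
    exact ((claimA x' y₀ hmem).log (ne_of_gt (hTpos x' y₀ hmem))).deriv
  -- outer derivative
  have hev : (fun x' => deriv (fun y' => ψ (m + 1) x' y') y₀) =ᶠ[nhds x₀]
      fun x' => S (x', y₀) / T (x', y₀) :=
    Filter.eventually_of_mem (hVo.mem_nhds hxV) key1
  rw [hev.deriv_eq]
  have hT0 : T (x₀, y₀) ≠ 0 := ne_of_gt (hTpos x₀ y₀ hxy)
  have hdiv : HasDerivAt (fun x' => S (x', y₀) / T (x', y₀))
      ((D2 (x₀, y₀) * T (x₀, y₀) - S (x₀, y₀) * R (x₀, y₀)) / T (x₀, y₀) ^ 2) x₀ :=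
    claimC.div claimB hT0
  rw [hdiv.deriv]
  -- right-hand side
  have hpos2 : 0 < tau2 f (m + 2) x₀ y₀ := hpos (m + 2) hm2 x₀ y₀ hxy
  have hposm : 0 < tau2 f m x₀ y₀ := hpos m (by omega) x₀ y₀ hxy
  have hpos1 : 0 < tau2 f (m + 1) x₀ y₀ := hpos (m + 1) (by omega) x₀ y₀ hxy
  have hrhs : Real.exp (ψ (m + 1 + 1) x₀ y₀ + ψ (m + 1 - 1) x₀ y₀ - 2 * ψ (m + 1) x₀ y₀)
      = tau2 f (m + 2) x₀ y₀ * tau2 f m x₀ y₀ /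
        (tau2 f (m + 1) x₀ y₀ * tau2 f (m + 1) x₀ y₀) := by
    rw [show m + 1 + 1 = m + 2 from rfl, show m + 1 - 1 = m from rfl]
    rw [hψ, hψ, hψ]
    rw [show (2 : ℝ) * Real.log (tau2 f (m + 1) x₀ y₀)
        = Real.log (tau2 f (m + 1) x₀ y₀) + Real.log (tau2 f (m + 1) x₀ y₀) from by ring]
    rw [Real.exp_sub, Real.exp_add, Real.exp_add, Real.exp_log hpos2, Real.exp_log hposm,
      Real.exp_log hpos1]
  rw [hrhs]
  -- the Jacobi identity
  have hjac : tau2 f (m + 2) x₀ y₀ * tau2 f m x₀ y₀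
      = T (x₀, y₀) * D2 (x₀, y₀) - R (x₀, y₀) * S (x₀, y₀) := by
    have hj := jacobi_det m (fun i j => Φ i j (x₀, y₀)) (by
      intro hc
      exact (ne_of_gt hposm) (by rw [htau m x₀ y₀]; exact hc))
    rw [htau (m + 2) x₀ y₀, htau m x₀ y₀]
    exact hj
  have hTeq : tau2 f (m + 1) x₀ y₀ = T (x₀, y₀) := htau (m + 1) x₀ y₀
  rw [hjac, hTeq]
  ring
end
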